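/- Suppose Condition 1 holds and Ω is strictly convex on dom(Ω). Then for every y ∈ 𝒴, the convolutional Fenchel–Young loss L_{Ω_T}(·, y) is convex and differentiable on all of ℝ^ϱ. -/

import Mathlib

open scoped BigOperators
open scoped RealInnerProductSpace
noncomputable section

/-- Score/probability space: `ℝ^ϱ` with Euclidean structure. -/
abbrev E (ϱ : ℕ) : Type := EuclideanSpace ℝ (Fin ϱ)

/-- Euclidean dot product `⟨θ, p⟩`. -/
def dot {ϱ : ℕ} (θ p : E ϱ) : ℝ := ∑ i, θ i * p i

/-- Fenchel conjugate of an extended-real-valued function: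
`Ω^*(θ) = sup_{p ∈ dom Ω} ⟨θ, p⟩ − Ω(p)`. -/
def conj {ϱ : ℕ} (f : E ϱ → EReal) (θ : E ϱ) : EReal :=
  ⨆ p ∈ {q : E ϱ | f q ≠ ⊤}, (((dot θ p : ℝ) : EReal) - f p)

/-- Convexity for extended-real-valued functions. -/
def ErealConvex {ϱ : ℕ} (f : E ϱ → EReal) : Prop :=
  ∀ p q : E ϱ, ∀ a b : ℝ, 0 ≤ a → 0 ≤ b → a + b = 1 →
    f (a • p + b • q) ≤ (a : EReal) * f p + (b : EReal) * f q

/-- `T(p) = − min_{t ∈ Ŷ} ⟨p, ℓ^ρ(t)⟩`. -/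
def Tfun {ϱ N : ℕ} (ℓρ : Fin N → E ϱ) (p : E ϱ) : ℝ := - ⨅ t, dot p (ℓρ t)

/-- The convolutional negentropy `Ω_T = Ω + T`. -/
def OmegaT {ϱ N : ℕ} (Ω : E ϱ → EReal) (ℓρ : Fin N → E ϱ) (p : E ϱ) : EReal :=
  Ω p + ((Tfun ℓρ p : ℝ) : EReal)

/-- Loss-matrix action: `L^ρ π = Σ_t π_t ℓ^ρ(t)`. -/
def Lrho {ϱ N : ℕ} (ℓρ : Fin N → E ϱ) (π : Fin N → ℝ) : E ϱ :=
  WithLp.toLp 2 (fun i => ∑ t, π t * ℓρ t i)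

/-- Condition 1: Ω proper convex l.s.c., `conv(ρ(𝒴)) ⊆ dom Ω`, `dom Ω^* = ℝ^ϱ`. -/
def Condition1 {ϱ K : ℕ} (Ω : E ϱ → EReal) (ρ : Fin K → E ϱ) : Prop :=
  (∀ p, Ω p ≠ ⊥) ∧ (∃ p, Ω p ≠ ⊤) ∧ ErealConvex Ω ∧ LowerSemicontinuous Ω ∧
  (convexHull ℝ (Set.range ρ) ⊆ {p : E ϱ | Ω p ≠ ⊤}) ∧ (∀ θ : E ϱ, conj Ω θ ≠ ⊤)

/-- `Π(θ) = argmin_{π ∈ Δ^N} Ω^*(θ + L^ρ π)`. -/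
def Pii {ϱ N : ℕ} (Ω : E ϱ → EReal) (ℓρ : Fin N → E ϱ) (θ : E ϱ) : Set (Fin N → ℝ) :=
  {π | π ∈ stdSimplex ℝ (Fin N) ∧
       ∀ π' ∈ stdSimplex ℝ (Fin N), conj Ω (θ + Lrho ℓρ π) ≤ conj Ω (θ + Lrho ℓρ π')}

/-- The convolutional Fenchel–Young loss `L_{Ω_T}(θ, y) = Ω_T^*(θ) + Ω_T(ρ(y)) − ⟨θ, ρ(y)⟩`. -/
def LossFY {ϱ N K : ℕ} (Ω : E ϱ → EReal) (ρ : Fin K → E ϱ) (ℓρ : Fin N → E ϱ)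
    (θ : E ϱ) (y : Fin K) : ℝ :=
  (conj (OmegaT Ω ℓρ) θ).toReal + (OmegaT Ω ℓρ (ρ y)).toReal - dot θ (ρ y)

/-- Surrogate risk of the convolutional Fenchel–Young loss. -/
def RsurL {ϱ N K : ℕ} (Ω : E ϱ → EReal) (ρ : Fin K → E ϱ) (ℓρ : Fin N → E ϱ)
    (θ : E ϱ) (η : Fin K → ℝ) : ℝ :=
  ∑ y, η y * LossFY Ω ρ ℓρ θ y

/-- Surrogate regret of the convolutional Fenchel–Young loss. -/
def RegSur {ϱ N K : ℕ} (Ω : E ϱ → EReal) (ρ : Fin K → E ϱ) (ℓρ : Fin N → E ϱ)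
    (θ : E ϱ) (η : Fin K → ℝ) : ℝ :=
  RsurL Ω ρ ℓρ θ η - ⨅ θ' : E ϱ, RsurL Ω ρ ℓρ θ' η

/-- Target regret of a discrete prediction `t` under target loss `ℓ`. -/
def RegTar {N K : ℕ} (ℓ : Fin N → Fin K → ℝ) (t : Fin N) (η : Fin K → ℝ) : ℝ :=
  (∑ y, η y * ℓ t y) - ⨅ t' : Fin N, ∑ y, η y * ℓ t' y

/-- Real-valued version of a finite Fenchel conjugate. -/
def starFn {ϱ : ℕ} (f : E ϱ → EReal) (θ : E ϱ) : ℝ := (conj f θ).toReal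

lemma dot_eq_inner {ϱ : ℕ} {θ p : E ϱ} : dot θ p = ⟪θ, p⟫ := by
  simp [dot, PiLp.inner_apply, mul_comm]

lemma dot_add_left {ϱ : ℕ} (x y p : E ϱ) : dot (x + y) p = dot x p + dot y p := by
  simp [dot_eq_inner, inner_add_left]

lemma dot_sub_left {ϱ : ℕ} (x y p : E ϱ) : dot (x - y) p = dot x p - dot y p := by
  simp [dot_eq_inner, inner_sub_left]

lemma dot_comm {ϱ : ℕ} (x y : E ϱ) : dot x y = dot y x := by
  simp [dot, mul_comm]

lemma abs_dot_le {ϱ : ℕ} (x y : E ϱ) : |dot x y| ≤ ‖x‖ * ‖y‖ := by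
  rw [dot_eq_inner]; exact abs_real_inner_le_norm x y

lemma dot_smul_comb {ϱ : ℕ} (a b : ℝ) (x y p : E ϱ) :
    dot (a • x + b • y) p = a * dot x p + b * dot y p := by
  simp [dot, add_mul, Finset.sum_add_distrib, Finset.mul_sum, mul_assoc]

lemma neg_Tfun_le {ϱ N : ℕ} (ℓρ : Fin N → E ϱ) (p : E ϱ) (t : Fin N) :
    - Tfun ℓρ p ≤ dot p (ℓρ t) := by
  rw [Tfun, neg_neg]
  exact ciInf_le (Set.Finite.bddBelow (Set.finite_range _)) t

lemma Tfun_bound {ϱ N : ℕ} (hN : 0 < N) (ℓρ : Fin N → E ϱ) (p : E ϱ) :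
    |Tfun ℓρ p| ≤ (∑ t, ‖ℓρ t‖) * ‖p‖ := by
  haveI : Nonempty (Fin N) := Fin.pos_iff_nonempty.mp hN
  set B : ℝ := ∑ t, ‖ℓρ t‖ with hB
  have hbd : ∀ t : Fin N, |dot p (ℓρ t)| ≤ B * ‖p‖ := by
    intro t
    have h1 : |dot p (ℓρ t)| ≤ ‖p‖ * ‖ℓρ t‖ := abs_dot_le p (ℓρ t)
    have h2 : ‖ℓρ t‖ ≤ B := Finset.single_le_sum (f := fun t => ‖ℓρ t‖)
      (fun i _ => norm_nonneg _) (Finset.mem_univ t)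
    nlinarith [norm_nonneg p]
  rw [Tfun, abs_neg, abs_le]
  constructor
  · have := le_ciInf (fun t => (abs_le.mp (hbd t)).1)
    linarith
  · have h := ciInf_le (f := fun t => dot p (ℓρ t)) (Set.Finite.bddBelow (Set.finite_range _)) (Classical.arbitrary (Fin N))
    have := (abs_le.mp (hbd (Classical.arbitrary (Fin N)))).2
    linarith

lemma Tfun_comb {ϱ N : ℕ} (hN : 0 < N) (ℓρ : Fin N → E ϱ) (p q : E ϱ) {a b : ℝ}
    (ha : 0 ≤ a) (hb : 0 ≤ b) :
    Tfun ℓρ (a • p + b • q) ≤ a * Tfun ℓρ p + b * Tfun ℓρ q := by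
  haveI : Nonempty (Fin N) := Fin.pos_iff_nonempty.mp hN
  have key : a * (⨅ t, dot p (ℓρ t)) + b * (⨅ t, dot q (ℓρ t)) ≤ ⨅ t, dot (a • p + b • q) (ℓρ t) := by
    apply le_ciInf
    intro t
    rw [dot_smul_comb]
    have h1 : a * (⨅ s, dot p (ℓρ s)) ≤ a * dot p (ℓρ t) :=
      mul_le_mul_of_nonneg_left (ciInf_le (Set.Finite.bddBelow (Set.finite_range _)) t) ha
    have h2 : b * (⨅ s, dot q (ℓρ s)) ≤ b * dot q (ℓρ t) :=
      mul_le_mul_of_nonneg_left (ciInf_le (Set.Finite.bddBelow (Set.finite_range _)) t) hb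
    linarith
  simp only [Tfun]
  linarith

lemma Tfun_continuous {ϱ N : ℕ} (hN : 0 < N) (ℓρ : Fin N → E ϱ) :
    Continuous (Tfun ℓρ) := by
  haveI : Nonempty (Fin N) := Fin.pos_iff_nonempty.mp hN
  have heq : Tfun ℓρ = fun p => -(Finset.univ.inf' Finset.univ_nonempty (fun t => dot p (ℓρ t))) := by
    funext p
    rw [Tfun, Finset.inf'_univ_eq_ciInf]
  rw [heq]
  apply Continuous.neg
  apply Continuous.finset_inf'_apply
  intro t _
  have : (fun p : E ϱ => dot p (ℓρ t)) = fun p => ⟪ℓρ t, p⟫ := by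
    funext p; rw [dot_eq_inner, real_inner_comm]
  rw [this]
  exact (innerSL ℝ (ℓρ t)).continuous

def Ffun {ϱ N : ℕ} (Ω : E ϱ → EReal) (ℓρ : Fin N → E ϱ) (θ p : E ϱ) : ℝ :=
  dot θ p - (Ω p).toReal - Tfun ℓρ p

lemma term_eq {ϱ : ℕ} (Ω : E ϱ → EReal) (hbot : ∀ p, Ω p ≠ ⊥) {p : E ϱ} (hp : Ω p ≠ ⊤)
    (x : ℝ) : ((x : EReal) - Ω p) = ((x - (Ω p).toReal : ℝ) : EReal) := by
  rw [EReal.coe_sub]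
  congr 1
  exact (EReal.coe_toReal hp (hbot p)).symm

lemma lemA {ϱ : ℕ} (Ω : E ϱ → EReal) (hbot : ∀ p, Ω p ≠ ⊥) (u : E ϱ)
    (hconj : conj Ω u ≠ ⊤) :
    ∀ p, Ω p ≠ ⊤ → dot u p - (Ω p).toReal ≤ (conj Ω u).toReal := by
  intro p hp
  have hterm : ((dot u p - (Ω p).toReal : ℝ) : EReal) ≤ conj Ω u := by
    rw [← term_eq Ω hbot hp]
    exact le_iSup₂ (f := fun q (_ : q ∈ {q : E ϱ | Ω q ≠ ⊤}) => ((dot u q : ℝ) : EReal) - Ω q) p hp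
  have hne : conj Ω u ≠ ⊥ := by
    intro h; rw [h] at hterm; exact (EReal.coe_ne_bot _) (le_bot_iff.mp hterm)
  have := EReal.toReal_le_toReal hterm (EReal.coe_ne_bot _) hconj
  rwa [EReal.toReal_coe] at this

lemma norm_le_sum_abs {ϱ : ℕ} (p : E ϱ) : ‖p‖ ≤ ∑ i, |p i| := by
  rw [EuclideanSpace.norm_eq]
  have h1 : ∑ i, ‖p i‖ ^ 2 ≤ (∑ i, ‖p i‖) ^ 2 :=
    Finset.sum_sq_le_sq_sum_of_nonneg (fun i _ => norm_nonneg _)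
  calc Real.sqrt (∑ i, ‖p i‖ ^ 2) ≤ Real.sqrt ((∑ i, ‖p i‖) ^ 2) := Real.sqrt_le_sqrt h1
    _ = ∑ i, ‖p i‖ := Real.sqrt_sq (Finset.sum_nonneg fun i _ => norm_nonneg _)
    _ = ∑ i, |p i| := by simp [Real.norm_eq_abs]

lemma F_le_dot {ϱ N : ℕ} (Ω : E ϱ → EReal) (ℓρ : Fin N → E ϱ) (hN : 0 < N)
    (hbot : ∀ p, Ω p ≠ ⊥) (hconj : ∀ u, conj Ω u ≠ ⊤) (θ v : E ϱ) :
    ∀ p, Ω p ≠ ⊤ → Ffun Ω ℓρ θ p ≤ dot v p + (conj Ω (θ + ℓρ ⟨0, hN⟩ - v)).toReal := by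
  intro p hp
  set t₀ : Fin N := ⟨0, hN⟩
  have h1 : - Tfun ℓρ p ≤ dot p (ℓρ t₀) := neg_Tfun_le ℓρ p t₀
  have h2 : dot (θ + ℓρ t₀ - v) p - (Ω p).toReal ≤ (conj Ω (θ + ℓρ t₀ - v)).toReal :=
    lemA Ω hbot _ (hconj _) p hp
  have h3 : dot (θ + ℓρ t₀ - v) p = dot θ p + dot p (ℓρ t₀) - dot v p := by
    rw [dot_sub_left, dot_add_left, dot_comm (ℓρ t₀) p]
  rw [Ffun]
  linarith

def signVec {ϱ : ℕ} (a : ℝ) (σ : Fin ϱ → Bool) : E ϱ :=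
  (WithLp.equiv 2 (Fin ϱ → ℝ)).symm (fun i => if σ i then -a else a)

lemma dot_signVec {ϱ : ℕ} (a : ℝ) (p : E ϱ) :
    dot (signVec a (fun i => decide (0 ≤ p i))) p = -a * ∑ i, |p i| := by
  rw [dot, Finset.mul_sum]
  apply Finset.sum_congr rfl
  intro i _
  have : signVec a (fun i => decide (0 ≤ p i)) i = if 0 ≤ p i then -a else a := by
    simp [signVec]
  rw [this]
  by_cases h : 0 ≤ p i
  · rw [if_pos h, abs_of_nonneg h]
  · rw [if_neg h, abs_of_neg (lt_of_not_ge h)]; ring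

lemma coercive {ϱ N : ℕ} (Ω : E ϱ → EReal) (ℓρ : Fin N → E ϱ) (hN : 0 < N)
    (hbot : ∀ p, Ω p ≠ ⊥) (hconj : ∀ u, conj Ω u ≠ ⊤) (θ : E ϱ) (a : ℝ) (ha : 0 ≤ a) :
    ∃ C : ℝ, ∀ p, Ω p ≠ ⊤ → Ffun Ω ℓρ θ p ≤ -a * ‖p‖ + C := by
  haveI : Nonempty (Fin ϱ → Bool) := ⟨fun _ => true⟩
  refine ⟨Finset.univ.sup' Finset.univ_nonempty
    (fun σ : Fin ϱ → Bool => (conj Ω (θ + ℓρ ⟨0, hN⟩ - signVec a σ)).toReal), ?_⟩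
  intro p hp
  set σp : Fin ϱ → Bool := fun i => decide (0 ≤ p i)
  have h1 := F_le_dot Ω ℓρ hN hbot hconj θ (signVec a σp) p hp
  have h2 : dot (signVec a σp) p = -a * ∑ i, |p i| := dot_signVec a p
  have h3 : -a * ∑ i, |p i| ≤ -a * ‖p‖ := by
    have := norm_le_sum_abs p
    nlinarith
  have h4 : (conj Ω (θ + ℓρ ⟨0, hN⟩ - signVec a σp)).toReal ≤
      Finset.univ.sup' Finset.univ_nonempty
        (fun σ : Fin ϱ → Bool => (conj Ω (θ + ℓρ ⟨0, hN⟩ - signVec a σ)).toReal) :=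
    Finset.le_sup' (fun σ : Fin ϱ → Bool => (conj Ω (θ + ℓρ ⟨0, hN⟩ - signVec a σ)).toReal) (Finset.mem_univ σp)
  linarith

lemma dot_zero_left {ϱ : ℕ} (p : E ϱ) : dot 0 p = 0 := by
  simp [dot_eq_inner]

lemma Ffun_shift {ϱ N : ℕ} (Ω : E ϱ → EReal) (ℓρ : Fin N → E ϱ) (θ' θ p : E ϱ) :
    Ffun Ω ℓρ θ' p = Ffun Ω ℓρ θ p + dot (θ' - θ) p := by
  simp only [Ffun, dot_sub_left]; ring

lemma omega_lower {ϱ : ℕ} (Ω : E ϱ → EReal) (hbot : ∀ p, Ω p ≠ ⊥)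
    (hconj : ∀ u, conj Ω u ≠ ⊤) :
    ∀ p, Ω p ≠ ⊤ → -(conj Ω 0).toReal ≤ (Ω p).toReal := by
  intro p hp
  have := lemA Ω hbot 0 (hconj 0) p hp
  rw [dot_zero_left] at this
  linarith

open Filter in
lemma cluster {ϱ N : ℕ} (Ω : E ϱ → EReal) (ℓρ : Fin N → E ϱ) (hN : 0 < N)
    (hbot : ∀ p, Ω p ≠ ⊥) (hlsc : LowerSemicontinuous Ω) (hconj : ∀ u, conj Ω u ≠ ⊤)
    {p₀ : E ϱ} (hp₀ : Ω p₀ ≠ ⊤) (θ : E ϱ) (θs : ℕ → E ϱ)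
    (hθ : Tendsto θs atTop (nhds θ)) (q : ℕ → E ϱ) (hqD : ∀ n, Ω (q n) ≠ ⊤)
    (ε : ℕ → ℝ) (hε : Tendsto ε atTop (nhds 0))
    (hmax : ∀ n, ∀ r, Ω r ≠ ⊤ → Ffun Ω ℓρ (θs n) r ≤ Ffun Ω ℓρ (θs n) (q n) + ε n) :
    ∃ qlim, Ω qlim ≠ ⊤ ∧ (∀ r, Ω r ≠ ⊤ → Ffun Ω ℓρ θ r ≤ Ffun Ω ℓρ θ qlim) ∧
      ∃ φ : ℕ → ℕ, StrictMono φ ∧ Tendsto (q ∘ φ) atTop (nhds qlim) := by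
  obtain ⟨C, hC⟩ := coercive Ω ℓρ hN hbot hconj θ 3 (by norm_num)
  set B : ℝ := ∑ t, ‖ℓρ t‖ with hB
  set M : ℝ := (C + 1 + ‖p₀‖ - Ffun Ω ℓρ θ p₀) / 2 with hM
  set C₀ : ℝ := (conj Ω 0).toReal with hC₀
  set M₂ : ℝ := (‖θ‖ + 1) * M + B * M - Ffun Ω ℓρ θ p₀ + ‖p₀‖ + 1 with hM₂
  -- eventual bounds
  have hev1 : ∀ᶠ n in atTop, dist (θs n) θ < 1 :=
    hθ (Metric.ball_mem_nhds θ one_pos)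
  have hev2 : ∀ᶠ n in atTop, dist (ε n) 0 < 1 :=
    hε (Metric.ball_mem_nhds 0 one_pos)
  have hev : ∀ᶠ n in atTop, (q n, (Ω (q n)).toReal) ∈
      Metric.closedBall (0 : E ϱ) M ×ˢ Set.Icc (-C₀) M₂ := by
    filter_upwards [hev1, hev2] with n h1 h2
    have hd : ‖θs n - θ‖ < 1 := by rwa [← dist_eq_norm]
    have hε1 : ε n < 1 := by rw [Real.dist_0_eq_abs] at h2; exact lt_of_abs_lt h2
    have key := hmax n p₀ hp₀
    have e1 : Ffun Ω ℓρ (θs n) p₀ = Ffun Ω ℓρ θ p₀ + dot (θs n - θ) p₀ :=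
      Ffun_shift Ω ℓρ _ _ _
    have e2 : Ffun Ω ℓρ (θs n) (q n) = Ffun Ω ℓρ θ (q n) + dot (θs n - θ) (q n) :=
      Ffun_shift Ω ℓρ _ _ _
    have b1 : |dot (θs n - θ) p₀| ≤ ‖θs n - θ‖ * ‖p₀‖ := abs_dot_le _ _
    have b2 : |dot (θs n - θ) (q n)| ≤ ‖θs n - θ‖ * ‖q n‖ := abs_dot_le _ _
    have hcoer := hC (q n) (hqD n)
    have hnq : (0:ℝ) ≤ ‖q n‖ := norm_nonneg _
    have hnp : (0:ℝ) ≤ ‖p₀‖ := norm_nonneg _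
    have hqM : ‖q n‖ ≤ M := by
      have a1 : Ffun Ω ℓρ θ p₀ - ‖p₀‖ ≤ Ffun Ω ℓρ θ (q n) + ‖q n‖ + 1 := by
        nlinarith [abs_le.mp b1, abs_le.mp b2]
      rw [hM]; nlinarith
    refine ⟨Metric.mem_closedBall.mpr (by rwa [dist_zero_right]), ?_, ?_⟩
    · show -C₀ ≤ (Ω (q n)).toReal
      exact omega_lower Ω hbot hconj (q n) (hqD n)
    · show (Ω (q n)).toReal ≤ M₂
      have hT : |Tfun ℓρ (q n)| ≤ B * ‖q n‖ := Tfun_bound hN ℓρ (q n)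
      have hθn : ‖θs n‖ ≤ ‖θ‖ + 1 := by
        have := norm_sub_norm_le (θs n) θ
        linarith
      have hdot : |dot (θs n) (q n)| ≤ (‖θ‖ + 1) * ‖q n‖ := by
        have := abs_dot_le (θs n) (q n)
        nlinarith
      -- Ffun θs n p₀ ≤ Ffun θs n (q n) + ε n, unfold RHS
      have e3 : Ffun Ω ℓρ (θs n) (q n)
          = dot (θs n) (q n) - (Ω (q n)).toReal - Tfun ℓρ (q n) := rfl
      have hBnn : 0 ≤ B := Finset.sum_nonneg fun t _ => norm_nonneg _
      rw [hM₂]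
      nlinarith [abs_le.mp b1, abs_le.mp hdot, abs_le.mp hT,
        mul_le_mul_of_nonneg_left hqM (by positivity : (0:ℝ) ≤ ‖θ‖ + 1),
        mul_le_mul_of_nonneg_left hqM hBnn]
  have hcomp : IsCompact (Metric.closedBall (0 : E ϱ) M ×ˢ Set.Icc (-C₀) M₂) :=
    (isCompact_closedBall _ _).prod isCompact_Icc
  obtain ⟨⟨qlim, L⟩, _, φ, hφ, hz⟩ :=
    hcomp.tendsto_subseq' hev.frequently
  have hq : Tendsto (fun k => q (φ k)) atTop (nhds qlim) :=
    (continuous_fst.tendsto _).comp hz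
  have hω : Tendsto (fun k => (Ω (q (φ k))).toReal) atTop (nhds L) :=
    (continuous_snd.tendsto _).comp hz
  have hθφ : Tendsto (fun k => θs (φ k)) atTop (nhds θ) := hθ.comp hφ.tendsto_atTop
  have hεφ : Tendsto (fun k => ε (φ k)) atTop (nhds 0) := hε.comp hφ.tendsto_atTop
  -- lower semicontinuity: Ω qlim ≤ L
  have hlim : Ω qlim ≤ (L : EReal) := by
    by_contra hcon
    obtain ⟨y, hy1, hy2⟩ := EReal.exists_between_coe_real (lt_of_not_ge hcon)
    have hev3 : ∀ᶠ x in nhds qlim, (y : EReal) < Ω x := hlsc qlim y hy2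
    have hev4 : ∀ᶠ k in atTop, (y : EReal) < Ω (q (φ k)) := hq.eventually hev3
    have hev5 : ∀ᶠ k in atTop, y ≤ (Ω (q (φ k))).toReal := by
      filter_upwards [hev4] with k hk
      have : Ω (q (φ k)) = (((Ω (q (φ k))).toReal : ℝ) : EReal) :=
        (EReal.coe_toReal (hqD _) (hbot _)).symm
      rw [this] at hk
      exact le_of_lt (EReal.coe_lt_coe_iff.mp hk)
    have : y ≤ L := ge_of_tendsto hω hev5
    exact absurd hy1 (not_lt.mpr (EReal.coe_le_coe_iff.mpr this))
  have hqlimD : Ω qlim ≠ ⊤ := fun h => by simp [h] at hlim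
  have hωle : (Ω qlim).toReal ≤ L := by
    have := EReal.toReal_le_toReal hlim (hbot qlim) (EReal.coe_ne_top L)
    rwa [EReal.toReal_coe] at this
  refine ⟨qlim, hqlimD, ?_, φ, hφ, hq⟩
  intro r hr
  have hdotr : Tendsto (fun k => dot (θs (φ k)) r) atTop (nhds (dot θ r)) := by
    simp only [dot_eq_inner]
    exact hθφ.inner tendsto_const_nhds
  have hA : Tendsto (fun k => Ffun Ω ℓρ (θs (φ k)) r) atTop (nhds (Ffun Ω ℓρ θ r)) := by
    simp only [Ffun]
    exact (hdotr.sub_const _).sub_const _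
  have hdotq : Tendsto (fun k => dot (θs (φ k)) (q (φ k))) atTop (nhds (dot θ qlim)) := by
    simp only [dot_eq_inner]
    exact hθφ.inner hq
  have hTq : Tendsto (fun k => Tfun ℓρ (q (φ k))) atTop (nhds (Tfun ℓρ qlim)) :=
    ((Tfun_continuous hN ℓρ).tendsto qlim).comp hq
  have hBt : Tendsto (fun k => dot (θs (φ k)) (q (φ k)) - (Ω (q (φ k))).toReal
      - Tfun ℓρ (q (φ k)) + ε (φ k)) atTop
      (nhds (dot θ qlim - L - Tfun ℓρ qlim + 0)) :=
    ((hdotq.sub hω).sub hTq).add hεφ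
  have hAB : ∀ k, Ffun Ω ℓρ (θs (φ k)) r ≤ dot (θs (φ k)) (q (φ k))
      - (Ω (q (φ k))).toReal - Tfun ℓρ (q (φ k)) + ε (φ k) :=
    fun k => hmax (φ k) r hr
  have hfinal : Ffun Ω ℓρ θ r ≤ dot θ qlim - L - Tfun ℓρ qlim + 0 :=
    le_of_tendsto_of_tendsto' hA hBt hAB
  have : Ffun Ω ℓρ θ qlim = dot θ qlim - (Ω qlim).toReal - Tfun ℓρ qlim := rfl
  linarith

open Filter in
lemma exists_max {ϱ N : ℕ} (Ω : E ϱ → EReal) (ℓρ : Fin N → E ϱ) (hN : 0 < N)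
    (hbot : ∀ p, Ω p ≠ ⊥) (hlsc : LowerSemicontinuous Ω) (hconj : ∀ u, conj Ω u ≠ ⊤)
    {p₀ : E ϱ} (hp₀ : Ω p₀ ≠ ⊤) (θ : E ϱ) :
    ∃ p, Ω p ≠ ⊤ ∧ ∀ r, Ω r ≠ ⊤ → Ffun Ω ℓρ θ r ≤ Ffun Ω ℓρ θ p := by
  obtain ⟨C, hC⟩ := coercive Ω ℓρ hN hbot hconj θ 0 le_rfl
  set S : Set ℝ := Ffun Ω ℓρ θ '' {p | Ω p ≠ ⊤} with hS
  have hSne : S.Nonempty := ⟨_, ⟨p₀, hp₀, rfl⟩⟩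
  have hSbdd : BddAbove S := by
    refine ⟨C, ?_⟩
    rintro x ⟨p, hp, rfl⟩
    have := hC p hp
    simpa using this
  set m : ℝ := sSup S with hm
  have happrox : ∀ n : ℕ, ∃ p, Ω p ≠ ⊤ ∧ m - 1 / (n + 1 : ℝ) < Ffun Ω ℓρ θ p := by
    intro n
    have hlt : m - 1 / (n + 1 : ℝ) < m := by
      have : (0:ℝ) < 1 / (n + 1 : ℝ) := by positivity
      linarith
    obtain ⟨x, ⟨p, hp, rfl⟩, hx⟩ := exists_lt_of_lt_csSup hSne hlt
    exact ⟨p, hp, hx⟩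
  choose q hq1 hq2 using happrox
  have hmax : ∀ n : ℕ, ∀ r, Ω r ≠ ⊤ →
      Ffun Ω ℓρ θ r ≤ Ffun Ω ℓρ θ (q n) + 1 / (n + 1 : ℝ) := by
    intro n r hr
    have h1 : Ffun Ω ℓρ θ r ≤ m := le_csSup hSbdd ⟨r, hr, rfl⟩
    have := hq2 n
    linarith
  obtain ⟨qlim, hqlimD, hqlimmax, _⟩ :=
    cluster Ω ℓρ hN hbot hlsc hconj hp₀ θ (fun _ => θ) tendsto_const_nhds q hq1
      (fun n => 1 / (n + 1 : ℝ)) tendsto_one_div_add_atTop_nhds_zero_nat hmax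
  exact ⟨qlim, hqlimD, hqlimmax⟩

lemma dot_smul_comb_right {ϱ : ℕ} (a b : ℝ) (θ x y : E ϱ) :
    dot θ (a • x + b • y) = a * dot θ x + b * dot θ y := by
  rw [dot_comm, dot_smul_comb, dot_comm x θ, dot_comm y θ]

lemma unique_max {ϱ N : ℕ} (Ω : E ϱ → EReal) (ℓρ : Fin N → E ϱ) (hN : 0 < N)
    (hstrict : StrictConvexOn ℝ {p : E ϱ | Ω p ≠ ⊤} (fun p => (Ω p).toReal))
    (θ : E ϱ) (p q : E ϱ) (hp : Ω p ≠ ⊤) (hq : Ω q ≠ ⊤)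
    (hpm : ∀ r, Ω r ≠ ⊤ → Ffun Ω ℓρ θ r ≤ Ffun Ω ℓρ θ p)
    (hqm : ∀ r, Ω r ≠ ⊤ → Ffun Ω ℓρ θ r ≤ Ffun Ω ℓρ θ q) : p = q := by
  by_contra hne
  have hmem : ((1:ℝ)/2) • p + ((1:ℝ)/2) • q ∈ {p : E ϱ | Ω p ≠ ⊤} :=
    hstrict.1 hp hq (by norm_num) (by norm_num) (by norm_num)
  have hstrictlt := hstrict.2 hp hq hne (by norm_num : (0:ℝ) < 1/2)
    (by norm_num : (0:ℝ) < 1/2) (by norm_num)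
  have hT := Tfun_comb hN ℓρ p q (by norm_num : (0:ℝ) ≤ 1/2) (by norm_num : (0:ℝ) ≤ 1/2)
  have hdot := dot_smul_comb_right (1/2) (1/2) θ p q
  have heq : Ffun Ω ℓρ θ p = Ffun Ω ℓρ θ q :=
    le_antisymm (hqm p hp) (hpm q hq)
  have hgt : Ffun Ω ℓρ θ p < Ffun Ω ℓρ θ (((1:ℝ)/2) • p + ((1:ℝ)/2) • q) := by
    simp only [Ffun, smul_eq_mul] at *
    nlinarith
  exact absurd (hpm _ hmem) (not_le.mpr hgt)

lemma OmegaT_eq_coe {ϱ N : ℕ} (Ω : E ϱ → EReal) (ℓρ : Fin N → E ϱ)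
    (hbot : ∀ p, Ω p ≠ ⊥) {p : E ϱ} (hp : Ω p ≠ ⊤) :
    OmegaT Ω ℓρ p = (((Ω p).toReal + Tfun ℓρ p : ℝ) : EReal) := by
  rw [OmegaT, EReal.coe_add]
  congr 1
  exact (EReal.coe_toReal hp (hbot p)).symm

lemma OmegaT_ne_top_iff {ϱ N : ℕ} (Ω : E ϱ → EReal) (ℓρ : Fin N → E ϱ)
    (hbot : ∀ p, Ω p ≠ ⊥) (p : E ϱ) :
    OmegaT Ω ℓρ p ≠ ⊤ ↔ Ω p ≠ ⊤ := by
  constructor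
  · intro h hc
    rw [OmegaT, hc] at h
    simp at h
  · intro h
    rw [OmegaT_eq_coe Ω ℓρ hbot h]
    exact EReal.coe_ne_top _

lemma conj_OmegaT_eq {ϱ N : ℕ} (Ω : E ϱ → EReal) (ℓρ : Fin N → E ϱ)
    (hbot : ∀ p, Ω p ≠ ⊥) (θ : E ϱ) {pm : E ϱ} (hpm : Ω pm ≠ ⊤)
    (hmax : ∀ r, Ω r ≠ ⊤ → Ffun Ω ℓρ θ r ≤ Ffun Ω ℓρ θ pm) :
    conj (OmegaT Ω ℓρ) θ = ((Ffun Ω ℓρ θ pm : ℝ) : EReal) := by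
  have hterm : ∀ p, Ω p ≠ ⊤ →
      ((dot θ p : ℝ) : EReal) - OmegaT Ω ℓρ p = ((Ffun Ω ℓρ θ p : ℝ) : EReal) := by
    intro p hp
    rw [OmegaT_eq_coe Ω ℓρ hbot hp, ← EReal.coe_sub]
    congr 1
    rw [Ffun]; ring
  apply le_antisymm
  · apply iSup₂_le
    intro p hp
    have hp' : Ω p ≠ ⊤ := (OmegaT_ne_top_iff Ω ℓρ hbot p).mp hp
    rw [hterm p hp']
    exact EReal.coe_le_coe_iff.mpr (hmax p hp')
  · rw [← hterm pm hpm]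
    exact le_iSup₂ (f := fun q (_ : q ∈ {q : E ϱ | OmegaT Ω ℓρ q ≠ ⊤}) =>
      ((dot θ q : ℝ) : EReal) - OmegaT Ω ℓρ q) pm
      ((OmegaT_ne_top_iff Ω ℓρ hbot pm).mpr hpm)

open Filter in
lemma argmax_cont {ϱ N : ℕ} (Ω : E ϱ → EReal) (ℓρ : Fin N → E ϱ) (hN : 0 < N)
    (hbot : ∀ p, Ω p ≠ ⊥) (hlsc : LowerSemicontinuous Ω) (hconj : ∀ u, conj Ω u ≠ ⊤)
    {p₀ : E ϱ} (hp₀ : Ω p₀ ≠ ⊤)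
    (hstrict : StrictConvexOn ℝ {p : E ϱ | Ω p ≠ ⊤} (fun p => (Ω p).toReal))
    (θ : E ϱ) {pθ : E ϱ} (hpθD : Ω pθ ≠ ⊤)
    (hpθ : ∀ r, Ω r ≠ ⊤ → Ffun Ω ℓρ θ r ≤ Ffun Ω ℓρ θ pθ)
    {ε : ℝ} (hε : 0 < ε) :
    ∃ δ > 0, ∀ θ' p', dist θ' θ < δ → Ω p' ≠ ⊤ →
      (∀ r, Ω r ≠ ⊤ → Ffun Ω ℓρ θ' r ≤ Ffun Ω ℓρ θ' p') → dist p' pθ < ε := by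
  by_contra hcon
  push_neg at hcon
  have hstep : ∀ n : ℕ, ∃ θ' p', dist θ' θ < 1 / (n + 1 : ℝ) ∧ Ω p' ≠ ⊤ ∧
      (∀ r, Ω r ≠ ⊤ → Ffun Ω ℓρ θ' r ≤ Ffun Ω ℓρ θ' p') ∧ ε ≤ dist p' pθ := by
    intro n
    obtain ⟨θ', p', h1, h2, h3, h4⟩ := hcon (1 / (n + 1 : ℝ)) (by positivity)
    exact ⟨θ', p', h1, h2, h3, h4⟩
  choose θs q hθ1 hq1 hq2 hq3 using hstep
  have hθtend : Tendsto θs atTop (nhds θ) := by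
    rw [tendsto_iff_dist_tendsto_zero]
    exact squeeze_zero (fun n => dist_nonneg) (fun n => le_of_lt (hθ1 n))
      tendsto_one_div_add_atTop_nhds_zero_nat
  have hmax : ∀ n, ∀ r, Ω r ≠ ⊤ →
      Ffun Ω ℓρ (θs n) r ≤ Ffun Ω ℓρ (θs n) (q n) + (0:ℝ) := by
    intro n r hr
    rw [add_zero]
    exact hq2 n r hr
  obtain ⟨qlim, hqlimD, hqlimmax, φ, hφ, hz⟩ :=
    cluster Ω ℓρ hN hbot hlsc hconj hp₀ θ θs hθtend q hq1
      (fun _ => (0:ℝ)) tendsto_const_nhds hmax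
  have heq : qlim = pθ :=
    unique_max Ω ℓρ hN hstrict θ qlim pθ hqlimD hpθD hqlimmax hpθ
  subst heq
  have hev : ∀ᶠ k in atTop, dist (q (φ k)) qlim < ε :=
    hz (Metric.ball_mem_nhds qlim hε)
  obtain ⟨k, hk⟩ := hev.exists
  exact absurd (hq3 (φ k)) (not_le.mpr hk)

lemma dot_sub_right {ϱ : ℕ} (θ x y : E ϱ) : dot θ (x - y) = dot θ x - dot θ y := by
  rw [dot_comm, dot_sub_left, dot_comm x θ, dot_comm y θ]

open Filter Asymptotics in
lemma sstar_hasFDerivAt {ϱ N : ℕ} (Ω : E ϱ → EReal) (ℓρ : Fin N → E ϱ) (hN : 0 < N)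
    (hbot : ∀ p, Ω p ≠ ⊥) (hlsc : LowerSemicontinuous Ω) (hconj : ∀ u, conj Ω u ≠ ⊤)
    {p₀ : E ϱ} (hp₀ : Ω p₀ ≠ ⊤)
    (hstrict : StrictConvexOn ℝ {p : E ϱ | Ω p ≠ ⊤} (fun p => (Ω p).toReal))
    (pm : E ϱ → E ϱ) (hpmD : ∀ θ, Ω (pm θ) ≠ ⊤)
    (hpmmax : ∀ θ r, Ω r ≠ ⊤ → Ffun Ω ℓρ θ r ≤ Ffun Ω ℓρ θ (pm θ)) (θ : E ϱ) :
    HasFDerivAt (fun θ' => (conj (OmegaT Ω ℓρ) θ').toReal) (innerSL ℝ (pm θ)) θ := by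
  have hs : ∀ θ', (conj (OmegaT Ω ℓρ) θ').toReal = Ffun Ω ℓρ θ' (pm θ') := by
    intro θ'
    rw [conj_OmegaT_eq Ω ℓρ hbot θ' (hpmD θ') (hpmmax θ'), EReal.toReal_coe]
  rw [hasFDerivAt_iff_isLittleO, isLittleO_iff]
  intro c hc
  obtain ⟨δ, hδ, hcont⟩ := argmax_cont Ω ℓρ hN hbot hlsc hconj hp₀ hstrict θ
    (hpmD θ) (hpmmax θ) hc
  rw [Metric.eventually_nhds_iff]
  refine ⟨δ, hδ, fun θ' hθ' => ?_⟩
  have hdistpm : dist (pm θ') (pm θ) < c := hcont θ' (pm θ') hθ' (hpmD θ') (hpmmax θ')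
  have hinner : (innerSL ℝ (pm θ)) (θ' - θ) = dot (θ' - θ) (pm θ) := by
    rw [dot_eq_inner, innerSL_apply_apply]
    exact (real_inner_comm _ _)
  have hlow : Ffun Ω ℓρ θ (pm θ) + dot (θ' - θ) (pm θ) ≤ Ffun Ω ℓρ θ' (pm θ') := by
    rw [← Ffun_shift]
    exact hpmmax θ' (pm θ) (hpmD θ)
  have hup : Ffun Ω ℓρ θ' (pm θ') - Ffun Ω ℓρ θ (pm θ) ≤ dot (θ' - θ) (pm θ') := by
    have h1 : Ffun Ω ℓρ θ (pm θ') ≤ Ffun Ω ℓρ θ (pm θ) := hpmmax θ (pm θ') (hpmD θ')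
    have h2 : Ffun Ω ℓρ θ' (pm θ') = Ffun Ω ℓρ θ (pm θ') + dot (θ' - θ) (pm θ') :=
      Ffun_shift Ω ℓρ _ _ _
    linarith
  have hcs : |dot (θ' - θ) (pm θ' - pm θ)| ≤ ‖θ' - θ‖ * ‖pm θ' - pm θ‖ := abs_dot_le _ _
  have hnormpm : ‖pm θ' - pm θ‖ < c := by rwa [← dist_eq_norm]
  have hsplit : dot (θ' - θ) (pm θ' - pm θ)
      = dot (θ' - θ) (pm θ') - dot (θ' - θ) (pm θ) := dot_sub_right _ _ _
  have hnn : (0:ℝ) ≤ ‖θ' - θ‖ := norm_nonneg _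
  rw [hs, hs, hinner, Real.norm_eq_abs, abs_le]
  have habs := abs_le.mp hcs
  have hc' : (0:ℝ) ≤ c * ‖θ' - θ‖ := by positivity
  have hprod : ‖θ' - θ‖ * ‖pm θ' - pm θ‖ ≤ ‖θ' - θ‖ * c :=
    mul_le_mul_of_nonneg_left hnormpm.le hnn
  constructor
  · linarith
  · nlinarith

lemma Ffun_comb {ϱ N : ℕ} (Ω : E ϱ → EReal) (ℓρ : Fin N → E ϱ) {a b : ℝ}
    (hab : a + b = 1) (θ1 θ2 p : E ϱ) :
    Ffun Ω ℓρ (a • θ1 + b • θ2) p = a * Ffun Ω ℓρ θ1 p + b * Ffun Ω ℓρ θ2 p := by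
  simp only [Ffun, dot_smul_comb]
  linear_combination ((Ω p).toReal + Tfun ℓρ p) * hab

lemma sstar_convexOn {ϱ N : ℕ} (Ω : E ϱ → EReal) (ℓρ : Fin N → E ϱ)
    (hbot : ∀ p, Ω p ≠ ⊥)
    (pm : E ϱ → E ϱ) (hpmD : ∀ θ, Ω (pm θ) ≠ ⊤)
    (hpmmax : ∀ θ r, Ω r ≠ ⊤ → Ffun Ω ℓρ θ r ≤ Ffun Ω ℓρ θ (pm θ)) :
    ConvexOn ℝ Set.univ (fun θ => (conj (OmegaT Ω ℓρ) θ).toReal) := by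
  have hs : ∀ θ', (conj (OmegaT Ω ℓρ) θ').toReal = Ffun Ω ℓρ θ' (pm θ') := by
    intro θ'
    rw [conj_OmegaT_eq Ω ℓρ hbot θ' (hpmD θ') (hpmmax θ'), EReal.toReal_coe]
  refine ⟨convex_univ, ?_⟩
  intro θ1 _ θ2 _ a b ha hb hab
  simp only [hs, smul_eq_mul]
  rw [Ffun_comb Ω ℓρ hab]
  have h1 : Ffun Ω ℓρ θ1 (pm (a • θ1 + b • θ2)) ≤ Ffun Ω ℓρ θ1 (pm θ1) :=
    hpmmax θ1 _ (hpmD _)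
  have h2 : Ffun Ω ℓρ θ2 (pm (a • θ1 + b • θ2)) ≤ Ffun Ω ℓρ θ2 (pm θ2) :=
    hpmmax θ2 _ (hpmD _)
  nlinarith


/-- Under Condition 1 and strict convexity of Ω on its domain, the convolutional
Fenchel–Young loss `L_{Ω_T}(·, y)` is convex and differentiable on all of `ℝ^ϱ`. -/
theorem convexity_and_differentiability_of_convolutional_FY_loss
    {K N ϱ : ℕ} (hK : 0 < K) (hN : 0 < N) (hϱ : 0 < ϱ)
    (Ω : E ϱ → EReal) (ρ : Fin K → E ϱ) (ℓρ : Fin N → E ϱ)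
    (hcond : Condition1 Ω ρ)
    (hstrict : StrictConvexOn ℝ {p : E ϱ | Ω p ≠ ⊤} (fun p => (Ω p).toReal)) :
    ∀ y : Fin K,
      ConvexOn ℝ Set.univ (fun θ => LossFY Ω ρ ℓρ θ y) ∧
      Differentiable ℝ (fun θ => LossFY Ω ρ ℓρ θ y) := by
  obtain ⟨hbot, ⟨p₀, hp₀⟩, _, hlsc, _, hconj⟩ := hcond
  have hex := fun θ => exists_max Ω ℓρ hN hbot hlsc hconj hp₀ θ
  set pm : E ϱ → E ϱ := fun θ => Classical.choose (hex θ) with hpm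
  have hpmD : ∀ θ, Ω (pm θ) ≠ ⊤ := fun θ => (Classical.choose_spec (hex θ)).1
  have hpmmax : ∀ θ r, Ω r ≠ ⊤ → Ffun Ω ℓρ θ r ≤ Ffun Ω ℓρ θ (pm θ) :=
    fun θ => (Classical.choose_spec (hex θ)).2
  intro y
  have hloss : ∀ θ, LossFY Ω ρ ℓρ θ y
      = (conj (OmegaT Ω ℓρ) θ).toReal + (OmegaT Ω ℓρ (ρ y)).toReal - dot θ (ρ y) :=
    fun θ => rfl
  constructor
  · -- convexity
    have hconvS := sstar_convexOn Ω ℓρ hbot pm hpmD hpmmax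
    refine ⟨convex_univ, ?_⟩
    intro θ1 _ θ2 _ a b ha hb hab
    have h1 := hconvS.2 (Set.mem_univ θ1) (Set.mem_univ θ2) ha hb hab
    simp only [smul_eq_mul] at h1 ⊢
    rw [hloss, hloss, hloss, dot_smul_comb]
    have hc : (OmegaT Ω ℓρ (ρ y)).toReal
        = a * (OmegaT Ω ℓρ (ρ y)).toReal + b * (OmegaT Ω ℓρ (ρ y)).toReal := by
      rw [← add_mul, hab, one_mul]
    linarith
  · -- differentiability
    have hdiffS : Differentiable ℝ (fun θ => (conj (OmegaT Ω ℓρ) θ).toReal) :=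
      fun θ => (sstar_hasFDerivAt Ω ℓρ hN hbot hlsc hconj hp₀ hstrict pm hpmD
        hpmmax θ).differentiableAt
    have hdotdiff : Differentiable ℝ (fun θ : E ϱ => dot θ (ρ y)) := by
      have heq : (fun θ : E ϱ => dot θ (ρ y)) = fun θ => (innerSL ℝ (ρ y)) θ := by
        funext θ
        rw [dot_eq_inner, innerSL_apply_apply]
        exact real_inner_comm _ _
      rw [heq]
      exact (innerSL ℝ (ρ y)).differentiable
    have : (fun θ => LossFY Ω ρ ℓρ θ y)
        = fun θ => (conj (OmegaT Ω ℓρ) θ).toReal + (OmegaT Ω ℓρ (ρ y)).toReal - dot θ (ρ y) :=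
      rfl
    rw [this]
    exact (hdiffS.add_const _).sub hdotdiff
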